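/- Let (J_n, X_n) be a Markov renewal process, k a state with p_{kk} < 1, and define the reduced-process sojourn moments _ke_{ij}^{(r)} = E_i[(_kX_1)^r 1(_kJ_1 = j)] for i ∈ X, j ∈ X \ {k}. Then these moments satisfy, for r ≥ 1: _ke_{kj}^{(r)} = (1/(1 - p_{kk}))·(e_{kj}^{(r)} + Σ_{l=0}^{r-1} C(r,l) e_{kk}^{(r-l)} _ke_{kj}^{(l)}), and _ke_{ij}^{(r)} = e_{ij}^{(r)} + Σ_{l=0}^{r-1} C(r,l) e_{ik}^{(r-l)} _ke_{kj}^{(l)} + p_{ik} · _ke_{kj}^{(r)} for i ≠ k, where e_{ij}^{(r)} = E_i[X_1^r 1(J_1 = j)], e_{ij}^{(0)} = p_{ij}, and _ke_{ij}^{(0)} = _kp_{ij}. -/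

import Mathlib

open MeasureTheory ENNReal

/-- Prepend one step to a trajectory of a Markov renewal process. The path `ω` encodes
`ω n = (J_{n+1}, X_{n+1})`, so the state at time `r ≥ 1` is `(ω (r-1)).1`. -/
def consStep {X : Type*} (q : X × ℝ) (ω : ℕ → X × ℝ) : ℕ → X × ℝ
  | 0 => q
  | n + 1 => ω n

/-- Successive times `ₖV_n` of visits of the embedded chain to the reduced space
`X \ {k}`. -/
noncomputable def renV {X : Type*} (k : X) (ω : ℕ → X × ℝ) : ℕ → ℕ
  | 0 => 0
  | n + 1 => sInf {r | renV k ω n < r ∧ (ω (r - 1)).1 ≠ k}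

/-- The first reduced sojourn time `ₖX₁ = ∑_{r=1}^{ₖV₁} X_r`. -/
noncomputable def redSojourn {X : Type*} (k : X) (ω : ℕ → X × ℝ) : ℝ :=
  ∑ s ∈ Finset.range (renV k ω 1), (ω s).2

/-- The first state `ₖJ₁ = J_{ₖV₁}` of the reduced embedded chain. -/
noncomputable def redState {X : Type*} (k : X) (ω : ℕ → X × ℝ) : X :=
  (ω (renV k ω 1 - 1)).1

/-- The sojourn moments `e_{ij}^{(l)} = E_i[X₁^l 1(J₁ = j)]`. -/
noncomputable def sojournMoment {m : ℕ} (Q : Fin (m + 1) → Measure (Fin (m + 1) × ℝ))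
    (i j : Fin (m + 1)) (l : ℕ) : ℝ≥0∞ :=
  ∫⁻ q in {q | q.1 = j}, (ENNReal.ofReal q.2) ^ l ∂ Q i

/-- The reduced sojourn moments `ₖe_{ij}^{(l)} = E_i[(ₖX₁)^l 1(ₖJ₁ = j)]`. -/
noncomputable def redSojournMoment {m : ℕ} (k : Fin (m + 1))
    (μ : Fin (m + 1) → Measure (ℕ → Fin (m + 1) × ℝ))
    (i j : Fin (m + 1)) (l : ℕ) : ℝ≥0∞ :=
  ∫⁻ ω in {ω | redState k ω = j}, (ENNReal.ofReal (redSojourn k ω)) ^ l ∂ μ i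

/-!
Condition on the first step `(J₁, X₁)`. If `J₁ ≠ k` then `(ₖJ₁, ₖX₁) = (J₁, X₁)`; if `J₁ = k`
the path restarts from `k`, so `ₖX₁ = X₁ + ₖX₁'` where `(ₖJ₁, ₖX₁')` is distributed as
`(ₖJ₁, ₖX₁)` under `P_k`, independently of `X₁`. Expanding `(X₁ + ₖX₁')^r` binomially gives the
second identity for every `i`; for `i = k` it reads `x = c + p_{kk} x` with `x = ₖe_{kj}^{(r)}`,
which can be solved for `x` once `x < ∞`. Finiteness follows by induction on `r`: the same
first-step bound holds for the truncated moments `∫ min ((ₖX₁)^r, n)`, which are finite, and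
bounds them by `c / (1 - p_{kk})` uniformly in `n`.
-/

theorem ENNReal.le_inv_one_sub_mul_of_le_add_mul {x c p : ℝ≥0∞} (hx : x ≠ ⊤) (hp : p < 1)
    (h : x ≤ c + p * x) : x ≤ (1 - p)⁻¹ * c := by
  rw [← ENNReal.div_eq_inv_mul, ENNReal.le_div_iff_mul_le (.inl (tsub_pos_of_lt hp).ne')
    (.inl (tsub_le_self.trans_lt one_lt_top).ne), mul_comm, ENNReal.sub_mul fun _ _ => hx, one_mul]
  exact tsub_le_iff_right.2 h

theorem ENNReal.eq_inv_one_sub_mul_of_eq_add_mul {x c p : ℝ≥0∞} (hx : x ≠ ⊤) (hp : p < 1)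
    (h : x = c + p * x) : x = (1 - p)⁻¹ * c := by
  rw [← ENNReal.div_eq_inv_mul, ENNReal.eq_div_iff (tsub_pos_of_lt hp).ne'
    (tsub_le_self.trans_lt one_lt_top).ne, ENNReal.sub_mul fun _ _ => hx, one_mul]
  exact ENNReal.sub_eq_of_eq_add (mul_ne_top (hp.trans one_lt_top).ne hx) h

theorem add_pow_eq_sum_range_add {R : Type*} [CommSemiring R] (x y : R) (r : ℕ) :
    (x + y) ^ r = ∑ l ∈ Finset.range r, (r.choose l : R) * x ^ (r - l) * y ^ l + y ^ r := by
  rw [add_comm x, add_pow, Finset.sum_range_succ, Nat.sub_self, pow_zero, Nat.choose_self,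
    Nat.cast_one, mul_one, mul_one]
  exact congrArg (· + _) (Finset.sum_congr rfl fun _ _ => by ring)

section Lintegral

variable {Ω : Type*} [MeasurableSpace Ω] (ν : Measure Ω) (c : ℝ≥0∞) {Y : Ω → ℝ≥0∞}

theorem lintegral_eq_iSup_lintegral_min_natCast {f : Ω → ℝ≥0∞} (hf : Measurable f) :
    ∫⁻ ω, f ω ∂ν = ⨆ n : ℕ, ∫⁻ ω, min (f ω) n ∂ν := by
  rw [← lintegral_iSup (fun n => hf.min measurable_const)
    fun a b hab ω => min_le_min_left _ (Nat.mono_cast hab)]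
  congr 1
  funext ω
  rw [← inf_iSup_eq, ENNReal.iSup_natCast, inf_top_eq]

theorem lintegral_sum_choose_mul_pow (hY : Measurable Y) (r : ℕ) :
    ∫⁻ ω, ∑ l ∈ Finset.range r, (r.choose l : ℝ≥0∞) * c ^ (r - l) * Y ω ^ l ∂ν =
      ∑ l ∈ Finset.range r, (r.choose l : ℝ≥0∞) * c ^ (r - l) * ∫⁻ ω, Y ω ^ l ∂ν := by
  rw [lintegral_finsetSum _ fun l _ => (hY.pow_const l).const_mul _]
  simp_rw [lintegral_const_mul _ (hY.pow_const _)]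

theorem lintegral_add_pow (hY : Measurable Y) (r : ℕ) :
    ∫⁻ ω, (c + Y ω) ^ r ∂ν =
      ∑ l ∈ Finset.range r, (r.choose l : ℝ≥0∞) * c ^ (r - l) * ∫⁻ ω, Y ω ^ l ∂ν +
        ∫⁻ ω, Y ω ^ r ∂ν := by
  simp_rw [add_pow_eq_sum_range_add]
  rw [lintegral_add_left (Finset.measurable_sum _ fun l _ => (hY.pow_const l).const_mul _),
    lintegral_sum_choose_mul_pow ν c hY]

theorem lintegral_min_add_pow_le (hY : Measurable Y) (r : ℕ) (n : ℝ≥0∞) :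
    ∫⁻ ω, min ((c + Y ω) ^ r) n ∂ν ≤
      ∑ l ∈ Finset.range r, (r.choose l : ℝ≥0∞) * c ^ (r - l) * ∫⁻ ω, Y ω ^ l ∂ν +
        ∫⁻ ω, min (Y ω ^ r) n ∂ν :=
  calc ∫⁻ ω, min ((c + Y ω) ^ r) n ∂ν
      ≤ ∫⁻ ω, ∑ l ∈ Finset.range r, (r.choose l : ℝ≥0∞) * c ^ (r - l) * Y ω ^ l +
          min (Y ω ^ r) n ∂ν := lintegral_mono fun ω => by
        rw [add_pow_eq_sum_range_add, ← min_add_add_left]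
        exact min_le_min_left _ le_add_self
    _ = _ := by
      rw [lintegral_add_left (Finset.measurable_sum _ fun l _ => (hY.pow_const l).const_mul _),
        lintegral_sum_choose_mul_pow ν c hY]

end Lintegral

section Path

variable {X : Type*} {k : X} {q : X × ℝ} {ω : ℕ → X × ℝ}

lemma renV_one (k : X) (ω : ℕ → X × ℝ) :
    renV k ω 1 = sInf {r | 0 < r ∧ (ω (r - 1)).1 ≠ k} := by
  simp [renV]

lemma renV_one_eq_zero_iff : renV k ω 1 = 0 ↔ ∀ n, (ω n).1 = k := by
  rw [renV_one, Nat.sInf_eq_zero]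
  simp only [Set.mem_ofPred_eq, lt_self_iff_false, false_and, false_or,
    Set.eq_empty_iff_forall_notMem, not_and, not_not]
  exact ⟨fun h n => by simpa using h (n + 1) n.succ_pos, fun h r _ => h _⟩

lemma redState_of_renV_one_eq_zero (h : renV k ω 1 = 0) : redState k ω = k := by
  rw [redState, h]
  exact renV_one_eq_zero_iff.1 h 0

lemma renV_one_consStep_of_ne (hq : q.1 ≠ k) : renV k (consStep q ω) 1 = 1 := by
  have h1 : 1 ∈ {r | 0 < r ∧ (consStep q ω (r - 1)).1 ≠ k} := ⟨one_pos, hq⟩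
  rw [renV_one]
  exact le_antisymm (Nat.sInf_le h1) (le_csInf ⟨1, h1⟩ fun _ hb => hb.1)

lemma redState_consStep_of_ne (hq : q.1 ≠ k) : redState k (consStep q ω) = q.1 := by
  simp [redState, renV_one_consStep_of_ne hq, consStep]

lemma redSojourn_consStep_of_ne (hq : q.1 ≠ k) : redSojourn k (consStep q ω) = q.2 := by
  simp [redSojourn, renV_one_consStep_of_ne hq, consStep]

lemma renV_one_consStep_of_eq (hq : q.1 = k) (h : renV k ω 1 ≠ 0) :
    renV k (consStep q ω) 1 = renV k ω 1 + 1 := by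
  rw [renV_one] at h ⊢
  rw [renV_one, Nat.sInf_add' (Nat.pos_of_ne_zero h)]
  congr 1
  ext (_ | _ | s) <;> simp [consStep, hq]

lemma redState_consStep_of_eq (hq : q.1 = k) : redState k (consStep q ω) = redState k ω := by
  by_cases h : renV k ω 1 = 0
  -- a path that never leaves `k` has `renV = 0` (as `sInf ∅ = 0`) and reduced state `k`
  · have h' : renV k (consStep q ω) 1 = 0 :=
      renV_one_eq_zero_iff.2 fun n => by cases n; exacts [hq, renV_one_eq_zero_iff.1 h _]
    rw [redState_of_renV_one_eq_zero h, redState_of_renV_one_eq_zero h']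
  · obtain ⟨n, hn⟩ := Nat.exists_eq_succ_of_ne_zero h
    simp [redState, renV_one_consStep_of_eq hq h, hn, consStep]

lemma redSojourn_consStep_of_eq (hq : q.1 = k) (h : renV k ω 1 ≠ 0) :
    redSojourn k (consStep q ω) = q.2 + redSojourn k ω := by
  rw [redSojourn, redSojourn, renV_one_consStep_of_eq hq h, Finset.sum_range_succ']
  simp [consStep, add_comm]

end Path

section FirstStep

variable {X β : Type*} [Zero β] {k j : X} {q : X × ℝ} (f : ℝ → β) (ω : ℕ → X × ℝ)

lemma indicator_redState_consStep_of_ne (hq : q.1 ≠ k) :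
    {ω | redState k ω = j}.indicator (fun ω => f (redSojourn k ω)) (consStep q ω) =
      {q : X × ℝ | q.1 = j}.indicator (fun q => f q.2) q := by
  by_cases hqj : q.1 = j <;>
    simp [redState_consStep_of_ne hq, redSojourn_consStep_of_ne hq, hqj]

lemma indicator_redState_consStep_of_eq (hq : q.1 = k) (hj : j ≠ k) :
    {ω | redState k ω = j}.indicator (fun ω => f (redSojourn k ω)) (consStep q ω) =
      {ω | redState k ω = j}.indicator (fun ω => f (q.2 + redSojourn k ω)) ω := by
  by_cases hω : redState k ω = j
  · have hV : renV k ω 1 ≠ 0 := fun h => hj (hω ▸ redState_of_renV_one_eq_zero h)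
    simp [redState_consStep_of_eq hq, hω, redSojourn_consStep_of_eq hq hV]
  · simp [redState_consStep_of_eq hq, hω]

end FirstStep

lemma measurable_sInf_setOf {α : Type*} [MeasurableSpace α] {p : ℕ → α → Prop}
    (hp : ∀ n, MeasurableSet {x | p n x}) : Measurable fun x => sInf {n | p n x} := by
  classical
  -- `sInf ∅ = 0` is the `Nat.find` of a predicate that holds at `0`
  have hex : ∀ x, ∃ n, p n x ∨ ∀ n, ¬ p n x := fun x => by
    by_cases h : ∃ n, p n x
    · exact h.imp fun _ => Or.inl
    · exact ⟨0, Or.inr (not_exists.1 h)⟩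
  have heq : (fun x => sInf {n | p n x}) = fun x => Nat.find (hex x) := by
    funext x
    have hset : sInf {n | p n x} = sInf {n | p n x ∨ ∀ n, ¬ p n x} := by
      rcases em (∃ n, p n x) with h | h
      · simp only [not_forall_not.2 h, or_false]
      · simp [not_exists.1 h]
    rw [hset, Nat.sInf_def (s := {n | p n x ∨ ∀ n, ¬ p n x}) (hex x)]
    congr
  rw [heq]
  refine measurable_find hex fun n => ?_
  simp only [Set.ofPred_or, Set.ofPred_forall]
  exact (hp n).union (.iInter fun m => (hp m).compl)

section Measurability

variable {X : Type*} [MeasurableSpace X] [MeasurableSingletonClass X]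

lemma measurable_renV_one (k : X) : Measurable fun ω : ℕ → X × ℝ => renV k ω 1 := by
  simp_rw [renV_one]
  refine measurable_sInf_setOf fun r => (MeasurableSet.const _).inter ?_
  exact ((measurable_fst.comp (measurable_pi_apply _)) (measurableSet_singleton k)).compl

lemma measurable_redState (k : X) : Measurable (redState k : (ℕ → X × ℝ) → X) :=
  (measurable_from_prod_countable_left (f := fun p : (ℕ → X × ℝ) × ℕ => (p.1 (p.2 - 1)).1)
    fun n => measurable_fst.comp (measurable_pi_apply (n - 1))).comp
      (measurable_id.prodMk (measurable_renV_one k))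

lemma measurable_redSojourn (k : X) : Measurable (redSojourn k : (ℕ → X × ℝ) → ℝ) :=
  (measurable_from_prod_countable_left
    (f := fun p : (ℕ → X × ℝ) × ℕ => ∑ s ∈ Finset.range p.2, (p.1 s).2)
    fun n => Finset.measurable_sum (Finset.range n)
      fun s _ => measurable_snd.comp (measurable_pi_apply s)).comp
      (measurable_id.prodMk (measurable_renV_one k))

lemma measurableSet_redState_eq (k j : X) :
    MeasurableSet {ω : ℕ → X × ℝ | redState k ω = j} :=
  measurable_redState k (measurableSet_singleton j)

end Measurability

section ConsStep

variable {X : Type*} [MeasurableSpace X]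

lemma measurable_consStep_uncurry :
    Measurable fun p : (X × ℝ) × (ℕ → X × ℝ) => consStep p.1 p.2 :=
  measurable_pi_iff.2 fun n => by
    cases n
    exacts [measurable_fst, (measurable_pi_apply _).comp measurable_snd]

lemma measurable_consStep (q : X × ℝ) : Measurable (consStep q) :=
  measurable_consStep_uncurry.comp (measurable_const.prodMk measurable_id)

lemma measurable_map_consStep [MeasurableSingletonClass X] [Countable X]
    {μ : X → Measure (ℕ → X × ℝ)} [∀ i, SFinite (μ i)] :
    Measurable fun q : X × ℝ => (μ q.1).map (consStep q) := by
  refine Measure.measurable_of_measurable_coe _ fun s hs => ?_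
  simp_rw [Measure.map_apply (measurable_consStep _) hs]
  have hB := measurable_consStep_uncurry hs
  exact (measurable_from_prod_countable_left
    (f := fun p : (X × ℝ) × X => μ p.2 (consStep p.1 ⁻¹' s))
    fun i => measurable_measure_prodMk_left (ν := μ i) hB).comp
      (measurable_id.prodMk measurable_fst)

end ConsStep

lemma ae_snd_nonneg {X : Type*} [MeasurableSpace X] {ν : Measure (X × ℝ)}
    (h : ν {q | q.2 < 0} = 0) : ∀ᵐ q ∂ν, 0 ≤ q.2 := by
  filter_upwards [measure_eq_zero_iff_ae_notMem.1 h] with q hq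
  simpa using hq

section MarkovRenewal

variable {X : Type*} [MeasurableSpace X]

/-- `Q i` is the law of `(J₁, X₁)` and `μ i` the law of the path `(J_{n+1}, X_{n+1})_n`, both
under `J₀ = i`; the Markov renewal property says that after the first step the path restarts
afresh from `J₁`. -/
def IsMarkovRenewal (Q : X → Measure (X × ℝ)) (μ : X → Measure (ℕ → X × ℝ)) : Prop :=
  ∀ i A, MeasurableSet A → μ i A = ∫⁻ q, μ q.1 {ω | consStep q ω ∈ A} ∂Q i

variable {Q : X → Measure (X × ℝ)} {μ : X → Measure (ℕ → X × ℝ)}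

namespace IsMarkovRenewal

lemma measure_apply_mem_eq_zero (h : IsMarkovRenewal Q μ) {B : Set (X × ℝ)}
    (hB : MeasurableSet B) (hQB : ∀ i, Q i B = 0) (n : ℕ) (i : X) :
    μ i {ω | ω n ∈ B} = 0 := by
  induction n generalizing i with
  | zero =>
    rw [h i {ω | ω 0 ∈ B} (measurable_pi_apply 0 hB)]
    refine (lintegral_congr_ae ?_).trans lintegral_zero
    filter_upwards [measure_eq_zero_iff_ae_notMem.1 (hQB i)] with q hq
    simp [consStep, hq]
  | succ n ih =>
    rw [h i {ω | ω (n + 1) ∈ B} (measurable_pi_apply (n + 1) hB)]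
    exact (lintegral_congr fun q : X × ℝ => ih q.1).trans lintegral_zero

lemma ae_sojourn_nonneg (h : IsMarkovRenewal Q μ) (hQpos : ∀ i, Q i {q | q.2 < 0} = 0)
    (i : X) : ∀ᵐ ω ∂μ i, ∀ n, 0 ≤ (ω n).2 := by
  refine ae_all_iff.2 fun n => ?_
  filter_upwards [measure_eq_zero_iff_ae_notMem.1 (h.measure_apply_mem_eq_zero
    (measurableSet_lt measurable_snd measurable_const) hQpos n i)] with ω hω
  simpa using hω

lemma ae_redSojourn_nonneg (h : IsMarkovRenewal Q μ) (hQpos : ∀ i, Q i {q | q.2 < 0} = 0)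
    (k i : X) : ∀ᵐ ω ∂μ i, 0 ≤ redSojourn k ω :=
  (h.ae_sojourn_nonneg hQpos i).mono fun _ hω => Finset.sum_nonneg fun s _ => hω s

variable [MeasurableSingletonClass X] [Countable X]

lemma eq_bind [∀ i, SFinite (μ i)] (h : IsMarkovRenewal Q μ) (i : X) :
    μ i = (Q i).bind fun q => (μ q.1).map (consStep q) := by
  ext s hs
  rw [Measure.bind_apply hs measurable_map_consStep.aemeasurable, h i s hs]
  simp_rw [Measure.map_apply (measurable_consStep _) hs]
  rfl

lemma lintegral_eq [∀ i, SFinite (μ i)] (h : IsMarkovRenewal Q μ) (i : X)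
    {g : (ℕ → X × ℝ) → ℝ≥0∞} (hg : Measurable g) :
    ∫⁻ ω, g ω ∂μ i = ∫⁻ q, ∫⁻ ω, g (consStep q ω) ∂μ q.1 ∂Q i := by
  rw [h.eq_bind i, Measure.lintegral_bind measurable_map_consStep.aemeasurable hg.aemeasurable]
  exact lintegral_congr fun q => lintegral_map hg (measurable_consStep q)

theorem setLIntegral_redState_eq [∀ i, IsProbabilityMeasure (μ i)] (h : IsMarkovRenewal Q μ)
    {k j : X} (hj : j ≠ k) (i : X) {f : ℝ → ℝ≥0∞} (hf : Measurable f) :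
    ∫⁻ ω in {ω | redState k ω = j}, f (redSojourn k ω) ∂μ i =
      ∫⁻ q in {q | q.1 = j}, f q.2 ∂Q i +
        ∫⁻ q in {q | q.1 = k}, ∫⁻ ω in {ω | redState k ω = j}, f (q.2 + redSojourn k ω) ∂μ k
          ∂Q i := by
  have hfst : ∀ x : X, MeasurableSet {q : X × ℝ | q.1 = x} :=
    fun x => measurable_fst (measurableSet_singleton x)
  have hg : Measurable ({ω | redState k ω = j}.indicator fun ω => f (redSojourn k ω)) :=
    (hf.comp (measurable_redSojourn k)).indicator (measurableSet_redState_eq k j)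
  rw [← lintegral_indicator (measurableSet_redState_eq k j), h.lintegral_eq i hg,
    ← lintegral_indicator (hfst j), ← lintegral_indicator (hfst k),
    ← lintegral_add_left (f := {q : X × ℝ | q.1 = j}.indicator fun q => f q.2)
      ((hf.comp measurable_snd).indicator (hfst j))]
  refine lintegral_congr fun q => ?_
  by_cases hq : q.1 = k
  · simp_rw [indicator_redState_consStep_of_eq _ _ hq hj]
    rw [lintegral_indicator (measurableSet_redState_eq k j)]
    simp [hq, hj.symm]
  · simp_rw [indicator_redState_consStep_of_ne _ _ hq]
    simp [hq]

end IsMarkovRenewal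

end MarkovRenewal

section Moments

variable {m : ℕ} {Q : Fin (m + 1) → Measure (Fin (m + 1) × ℝ)}
  {μ : Fin (m + 1) → Measure (ℕ → Fin (m + 1) × ℝ)}

lemma setLIntegral_sum_choose_mul_add (i k : Fin (m + 1)) (r : ℕ) (E : ℕ → ℝ≥0∞) (Z : ℝ≥0∞) :
    ∫⁻ q in {q | q.1 = k},
        (∑ l ∈ Finset.range r, (r.choose l : ℝ≥0∞) * ENNReal.ofReal q.2 ^ (r - l) * E l) + Z
        ∂Q i =
      ∑ l ∈ Finset.range r, (r.choose l : ℝ≥0∞) * sojournMoment Q i k (r - l) * E l +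
        Q i {q | q.1 = k} * Z := by
  have hpow : ∀ l, Measurable fun q : Fin (m + 1) × ℝ => ENNReal.ofReal q.2 ^ l :=
    fun l => measurable_snd.ennreal_ofReal.pow_const l
  rw [lintegral_add_left (Finset.measurable_sum _ fun l _ => ((hpow _).const_mul _).mul_const _),
    lintegral_finsetSum _ fun l _ => ((hpow _).const_mul _).mul_const _, setLIntegral_const,
    mul_comm Z]
  congr 1
  refine Finset.sum_congr rfl fun l _ => ?_
  rw [lintegral_mul_const _ ((hpow _).const_mul _), lintegral_const_mul _ (hpow _), sojournMoment]

lemma setLIntegral_ofReal_add_pow (h : IsMarkovRenewal Q μ) (hQpos : ∀ i, Q i {q | q.2 < 0} = 0)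
    (k j : Fin (m + 1)) {a : ℝ} (ha : 0 ≤ a) (r : ℕ) :
    ∫⁻ ω in {ω | redState k ω = j}, ENNReal.ofReal (a + redSojourn k ω) ^ r ∂μ k =
      ∑ l ∈ Finset.range r,
          (r.choose l : ℝ≥0∞) * ENNReal.ofReal a ^ (r - l) * redSojournMoment k μ k j l +
        redSojournMoment k μ k j r := by
  have hae : ∀ᵐ ω ∂(μ k).restrict {ω | redState k ω = j},
      ENNReal.ofReal (a + redSojourn k ω) ^ r =
        (ENNReal.ofReal a + ENNReal.ofReal (redSojourn k ω)) ^ r := by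
    filter_upwards [ae_restrict_of_ae (h.ae_redSojourn_nonneg hQpos k k)] with ω hω
    rw [ENNReal.ofReal_add ha hω]
  rw [lintegral_congr_ae hae, lintegral_add_pow _ _ (measurable_redSojourn k).ennreal_ofReal]
  rfl

lemma setLIntegral_min_ofReal_add_pow_le (h : IsMarkovRenewal Q μ)
    (hQpos : ∀ i, Q i {q | q.2 < 0} = 0) (k j : Fin (m + 1)) {a : ℝ} (ha : 0 ≤ a) (r : ℕ)
    (n : ℝ≥0∞) :
    ∫⁻ ω in {ω | redState k ω = j}, min (ENNReal.ofReal (a + redSojourn k ω) ^ r) n ∂μ k ≤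
      ∑ l ∈ Finset.range r,
          (r.choose l : ℝ≥0∞) * ENNReal.ofReal a ^ (r - l) * redSojournMoment k μ k j l +
        ∫⁻ ω in {ω | redState k ω = j}, min (ENNReal.ofReal (redSojourn k ω) ^ r) n ∂μ k := by
  have hae : ∀ᵐ ω ∂(μ k).restrict {ω | redState k ω = j},
      min (ENNReal.ofReal (a + redSojourn k ω) ^ r) n =
        min ((ENNReal.ofReal a + ENNReal.ofReal (redSojourn k ω)) ^ r) n := by
    filter_upwards [ae_restrict_of_ae (h.ae_redSojourn_nonneg hQpos k k)] with ω hω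
    rw [ENNReal.ofReal_add ha hω]
  rw [lintegral_congr_ae hae]
  exact lintegral_min_add_pow_le _ _ (measurable_redSojourn k).ennreal_ofReal r n

variable [∀ i, IsProbabilityMeasure (μ i)]

theorem redSojournMoment_eq (h : IsMarkovRenewal Q μ) (hQpos : ∀ i, Q i {q | q.2 < 0} = 0)
    {k j : Fin (m + 1)} (hj : j ≠ k) (i : Fin (m + 1)) (r : ℕ) :
    redSojournMoment k μ i j r =
      sojournMoment Q i j r + ∑ l ∈ Finset.range r,
          (r.choose l : ℝ≥0∞) * sojournMoment Q i k (r - l) * redSojournMoment k μ k j l +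
        Q i {q | q.1 = k} * redSojournMoment k μ k j r :=
  calc redSojournMoment k μ i j r
      = sojournMoment Q i j r + ∫⁻ q in {q | q.1 = k},
          ∫⁻ ω in {ω | redState k ω = j}, ENNReal.ofReal (q.2 + redSojourn k ω) ^ r ∂μ k ∂Q i :=
        h.setLIntegral_redState_eq hj i (ENNReal.measurable_ofReal.pow_const r)
    _ = sojournMoment Q i j r + ∫⁻ q in {q | q.1 = k}, (∑ l ∈ Finset.range r,
          (r.choose l : ℝ≥0∞) * ENNReal.ofReal q.2 ^ (r - l) * redSojournMoment k μ k j l) +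
            redSojournMoment k μ k j r ∂Q i := by
      congr 1
      refine lintegral_congr_ae ?_
      filter_upwards [ae_restrict_of_ae (ae_snd_nonneg (hQpos i))] with q hq
      exact setLIntegral_ofReal_add_pow h hQpos k j hq r
    _ = _ := by rw [setLIntegral_sum_choose_mul_add, add_assoc]

lemma setLIntegral_min_redSojourn_pow_le (h : IsMarkovRenewal Q μ)
    (hQpos : ∀ i, Q i {q | q.2 < 0} = 0) {k j : Fin (m + 1)} (hj : j ≠ k) (r : ℕ) (n : ℝ≥0∞) :
    ∫⁻ ω in {ω | redState k ω = j}, min (ENNReal.ofReal (redSojourn k ω) ^ r) n ∂μ k ≤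
      sojournMoment Q k j r + ∑ l ∈ Finset.range r,
          (r.choose l : ℝ≥0∞) * sojournMoment Q k k (r - l) * redSojournMoment k μ k j l +
        Q k {q | q.1 = k} *
          ∫⁻ ω in {ω | redState k ω = j}, min (ENNReal.ofReal (redSojourn k ω) ^ r) n ∂μ k :=
  calc ∫⁻ ω in {ω | redState k ω = j}, min (ENNReal.ofReal (redSojourn k ω) ^ r) n ∂μ k
      = ∫⁻ q in {q | q.1 = j}, min (ENNReal.ofReal q.2 ^ r) n ∂Q k + ∫⁻ q in {q | q.1 = k},
          ∫⁻ ω in {ω | redState k ω = j}, min (ENNReal.ofReal (q.2 + redSojourn k ω) ^ r) n ∂μ k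
            ∂Q k :=
        h.setLIntegral_redState_eq hj k
          ((ENNReal.measurable_ofReal.pow_const r).min measurable_const)
    _ ≤ sojournMoment Q k j r + ∫⁻ q in {q | q.1 = k}, (∑ l ∈ Finset.range r,
          (r.choose l : ℝ≥0∞) * ENNReal.ofReal q.2 ^ (r - l) * redSojournMoment k μ k j l) +
            ∫⁻ ω in {ω | redState k ω = j}, min (ENNReal.ofReal (redSojourn k ω) ^ r) n ∂μ k
            ∂Q k := by
      refine add_le_add (lintegral_mono fun q => min_le_left _ _) (lintegral_mono_ae ?_)
      filter_upwards [ae_restrict_of_ae (ae_snd_nonneg (hQpos k))] with q hq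
      exact setLIntegral_min_ofReal_add_pow_le h hQpos k j hq r n
    _ = _ := by rw [setLIntegral_sum_choose_mul_add, add_assoc]

theorem redSojournMoment_ne_top (h : IsMarkovRenewal Q μ) (hQpos : ∀ i, Q i {q | q.2 < 0} = 0)
    {k j : Fin (m + 1)} (hj : j ≠ k) (hpkk : Q k {q | q.1 = k} < 1) {r : ℕ}
    (hfin : ∀ j, ∀ l ≤ r, sojournMoment Q k j l ≠ ⊤) :
    ∀ l ≤ r, redSojournMoment k μ k j l ≠ ⊤ := by
  intro l
  induction l using Nat.strong_induction_on with | _ l ih =>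
  intro hl
  have hc : sojournMoment Q k j l + ∑ l' ∈ Finset.range l,
      (l.choose l' : ℝ≥0∞) * sojournMoment Q k k (l - l') * redSojournMoment k μ k j l' ≠ ⊤ :=
    add_ne_top.2 ⟨hfin j l hl, sum_ne_top.2 fun l' hl' => by
      have hl'l := Finset.mem_range.1 hl'
      exact mul_ne_top (mul_ne_top (natCast_ne_top _) (hfin k _ (by omega)))
        (ih l' hl'l (by omega))⟩
  have htrunc : ∀ n : ℕ, ∫⁻ ω in {ω | redState k ω = j},
      min (ENNReal.ofReal (redSojourn k ω) ^ l) n ∂μ k ≠ ⊤ := fun n =>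
    ne_top_of_le_ne_top (by simpa using mul_ne_top (natCast_ne_top n) (measure_ne_top (μ k) _))
      (lintegral_mono fun _ => min_le_right _ _)
  rw [redSojournMoment, lintegral_eq_iSup_lintegral_min_natCast _
    ((measurable_redSojourn k).ennreal_ofReal.pow_const l)]
  exact ne_top_of_le_ne_top (mul_ne_top (inv_ne_top.2 (tsub_pos_of_lt hpkk).ne') hc)
    (iSup_le fun n => ENNReal.le_inv_one_sub_mul_of_le_add_mul (htrunc n) hpkk
      (setLIntegral_min_redSojourn_pow_le h hQpos hj l n))

end Moments

theorem reduced_sojourn_moment_recurrence_general {m : ℕ}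
    (Q : Fin (m + 1) → Measure (Fin (m + 1) × ℝ))
    (hQpos : ∀ i, Q i {q | q.2 < 0} = 0)
    (μ : Fin (m + 1) → Measure (ℕ → Fin (m + 1) × ℝ))
    (hprob : ∀ i, IsProbabilityMeasure (μ i))
    (hMRP : ∀ (i : Fin (m + 1)) (A : Set (ℕ → Fin (m + 1) × ℝ)), MeasurableSet A →
      μ i A = ∫⁻ q, μ q.1 {ω | consStep q ω ∈ A} ∂ Q i)
    (k : Fin (m + 1)) (hpkk : Q k {q | q.1 = k} < 1)
    (r : ℕ)
    (hfin : ∀ i j, ∀ l ≤ r, sojournMoment Q i j l ≠ ⊤) :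
    (∀ j, j ≠ k →
      redSojournMoment k μ k j r =
        (1 - Q k {q | q.1 = k})⁻¹ *
          (sojournMoment Q k j r + ∑ l ∈ Finset.range r,
            (r.choose l : ℝ≥0∞) * sojournMoment Q k k (r - l) * redSojournMoment k μ k j l)) ∧
    (∀ i j, i ≠ k → j ≠ k →
      redSojournMoment k μ i j r =
        sojournMoment Q i j r + (∑ l ∈ Finset.range r,
          (r.choose l : ℝ≥0∞) * sojournMoment Q i k (r - l) * redSojournMoment k μ k j l) +
        Q i {q | q.1 = k} * redSojournMoment k μ k j r) := by
  have := hprob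
  refine ⟨fun j hj => ?_, fun i j _ hj => redSojournMoment_eq hMRP hQpos hj i r⟩
  exact ENNReal.eq_inv_one_sub_mul_of_eq_add_mul
    (redSojournMoment_ne_top hMRP hQpos hj hpkk (hfin k) r le_rfl) hpkk
    (redSojournMoment_eq hMRP hQpos hj k r)

/-- The reduced sojourn moments satisfy, for `r ≥ 1` and `j ≠ k`:
`ₖe_{kj}^{(r)} = (1 - p_{kk})⁻¹ (e_{kj}^{(r)} + ∑_{l<r} C(r,l) e_{kk}^{(r-l)} ₖe_{kj}^{(l)})`
and, for `i ≠ k`,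
`ₖe_{ij}^{(r)} = e_{ij}^{(r)} + ∑_{l<r} C(r,l) e_{ik}^{(r-l)} ₖe_{kj}^{(l)} + p_{ik} ₖe_{kj}^{(r)}`. -/
theorem reduced_sojourn_moment_recurrence {m : ℕ}
    (Q : Fin (m + 1) → Measure (Fin (m + 1) × ℝ))
    (hQ : ∀ i, IsProbabilityMeasure (Q i))
    (hQpos : ∀ i, Q i {q | q.2 < 0} = 0)
    (μ : Fin (m + 1) → Measure (ℕ → Fin (m + 1) × ℝ))
    (hprob : ∀ i, IsProbabilityMeasure (μ i))
    (hMRP : ∀ (i : Fin (m + 1)) (A : Set (ℕ → Fin (m + 1) × ℝ)), MeasurableSet A →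
      μ i A = ∫⁻ q, μ q.1 {ω | consStep q ω ∈ A} ∂ Q i)
    (k : Fin (m + 1)) (hpkk : Q k {q | q.1 = k} < 1)
    (r : ℕ) (hr : 1 ≤ r)
    (hfin : ∀ i j, ∀ l ≤ r, sojournMoment Q i j l ≠ ⊤) :
    (∀ j, j ≠ k →
      redSojournMoment k μ k j r =
        (1 - Q k {q | q.1 = k})⁻¹ *
          (sojournMoment Q k j r + ∑ l ∈ Finset.range r,
            (r.choose l : ℝ≥0∞) * sojournMoment Q k k (r - l) * redSojournMoment k μ k j l)) ∧
    (∀ i j, i ≠ k → j ≠ k →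
      redSojournMoment k μ i j r =
        sojournMoment Q i j r + (∑ l ∈ Finset.range r,
          (r.choose l : ℝ≥0∞) * sojournMoment Q i k (r - l) * redSojournMoment k μ k j l) +
        Q i {q | q.1 = k} * redSojournMoment k μ k j r) :=
  reduced_sojourn_moment_recurrence_general Q hQpos μ hprob hMRP k hpkk r hfin
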